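/- arXiv:1904.10105 — 2 statements merged into one kernel-verified Lean document; each statement's English description precedes it below -/
import Mathlib

section
/- For functions f, g : X → ℕ, f estimates g (f ≈ g) if and only if for every subset Y ⊆ X, the restriction of f to Y is bounded if and only if the restriction of g to Y is bounded. -/
/-- `f` is dominated by `g`: there is `η : ℕ → ℕ` with `f x ≤ η (g x)` for all `x`. -/
def Dominated {X : Type*} (f g : X → ℕ) : Prop :=
  ∃ η : ℕ → ℕ, ∀ x, f x ≤ η (g x)

/-- `f` estimates `g`: mutual domination. -/
def Estimates {X : Type*} (f g : X → ℕ) : Prop :=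
  Dominated f g ∧ Dominated g f

/-- `f` is bounded on a subset `Y` of the domain. -/
def BoundedOn {X : Type*} (f : X → ℕ) (Y : Set X) : Prop :=
  ∃ N : ℕ, ∀ x ∈ Y, f x ≤ N

lemma dominated_imp {X : Type*} {f g : X → ℕ} (h : Dominated f g) {Y : Set X}
    (hb : BoundedOn g Y) : BoundedOn f Y := by
  obtain ⟨η, hη⟩ := h
  obtain ⟨N, hN⟩ := hb
  refine ⟨(Finset.range (N + 1)).sup η, fun x hx => ?_⟩
  exact le_trans (hη x) (Finset.le_sup (Finset.mem_range.mpr (Nat.lt_succ_of_le (hN x hx))))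

lemma imp_dominated {X : Type*} {f g : X → ℕ}
    (h : ∀ Y : Set X, BoundedOn g Y → BoundedOn f Y) : Dominated f g := by
  have hb : ∀ n : ℕ, BoundedOn f {x | g x ≤ n} := fun n =>
    h _ ⟨n, fun x hx => hx⟩
  refine ⟨fun n => Classical.choose (hb n), fun x => ?_⟩
  exact Classical.choose_spec (hb (g x)) x (by simp)

/-- `f ≈ g` iff on every subset `Y` of the domain, `f` and `g` are
either both bounded or both unbounded. -/
theorem estimates_iff_bounded_on_same_subsets {X : Type*} (f g : X → ℕ) :
    Estimates f g ↔ ∀ Y : Set X, (BoundedOn f Y ↔ BoundedOn g Y) := by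
  constructor
  · rintro ⟨hfg, hgf⟩ Y
    exact ⟨dominated_imp hgf, dominated_imp hfg⟩
  · intro h
    exact ⟨imp_dominated fun Y => (h Y).mpr, imp_dominated fun Y => (h Y).mp⟩
end

section
/- If M is a closed simply typed lambda-term of sort o that is not in beta-normal form and has complexity m (i.e., the maximal order of a subterm of M is m), then M contains a redex of order m, i.e., a subterm (λx.K) L with ord(λx.K) = m. -/
namespace STLC

inductive Ty : Type
  | o : Ty
  | arrow : Ty → Ty → Ty

def ord : Ty → ℕ
  | .o => 0
  | .arrow α β => max (1 + ord α) (ord β)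

/-- Intrinsically simply-typed lambda-terms in de Bruijn representation,
over the signature `a : o → o`, `b : o → o → o`, `e : o`. -/
inductive Tm : List Ty → Ty → Type
  | var {Γ} (i : Fin Γ.length) : Tm Γ (Γ.get i)
  | ca {Γ} : Tm Γ (.arrow .o .o)
  | cb {Γ} : Tm Γ (.arrow .o (.arrow .o .o))
  | ce {Γ} : Tm Γ .o
  | lam {Γ γ δ} (K : Tm (γ :: Γ) δ) : Tm Γ (.arrow γ δ)
  | app {Γ γ δ} (K : Tm Γ (.arrow γ δ)) (L : Tm Γ γ) : Tm Γ δ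

def IsLam : ∀ {Γ α}, Tm Γ α → Prop
  | _, _, .lam _ => True
  | _, _, _ => False

/-- Beta-normal form: no subterm `(λx.K) L`. -/
def Normal : ∀ {Γ α}, Tm Γ α → Prop
  | _, _, .app K L => Normal K ∧ Normal L ∧ ¬ IsLam K
  | _, _, .lam K => Normal K
  | _, _, _ => True

/-- Complexity: the maximum of orders of subterms. -/
def complexity : ∀ {Γ α}, Tm Γ α → ℕ
  | Γ, _, .var i => ord (Γ.get i)
  | _, _, .ca => ord (Ty.arrow .o .o)
  | _, _, .cb => ord (Ty.arrow .o (.arrow .o .o))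
  | _, _, .ce => ord Ty.o
  | _, _, .lam (γ := γ) (δ := δ) K => max (ord (.arrow γ δ)) (complexity K)
  | _, _, .app (δ := δ) K L => max (ord δ) (max (complexity K) (complexity L))

/-- The term contains a redex `(λx.K) L` of order `m`. -/
def HasRedexOfOrder (m : ℕ) : ∀ {Γ α}, Tm Γ α → Prop
  | _, _, .app (γ := γ) (δ := δ) K L =>
      (IsLam K ∧ ord (.arrow γ δ) = m) ∨ HasRedexOfOrder m K ∨ HasRedexOfOrder m L
  | _, _, .lam K => HasRedexOfOrder m K
  | _, _, _ => False

/-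
A redex `(λx.K) L` has order at least 1 and at most the complexity of the term containing it,
which settles complexity 1. For complexity `m ≥ 2`, descend from the closed term of sort `o`,
through subterms whose sort has order `< m`, to where complexity `m` is attained. Variables there
are bound by abstractions of order `< m`, so they have order `< m`, and constants have order `≤ 1`;
hence this is an application `K L` with `ord (sort of K) = m`. Following the head of `K` through
applications, the sort keeps order `m`, so the head can only be an abstraction: a redex of order `m`.
-/

theorem ord_left_lt_ord_arrow (γ δ : Ty) : ord γ < ord (.arrow γ δ) := by
  simp only [ord]; omega

theorem ord_right_le_ord_arrow (γ δ : Ty) : ord δ ≤ ord (.arrow γ δ) :=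
  le_max_right _ _

theorem one_le_ord_arrow (γ δ : Ty) : 1 ≤ ord (.arrow γ δ) :=
  le_max_of_le_left (Nat.le_add_right 1 _)

theorem ord_le_complexity : ∀ {Γ α} (M : Tm Γ α), ord α ≤ complexity M
  | _, _, .var _ | _, _, .ca | _, _, .cb | _, _, .ce => le_rfl
  | _, _, .lam _ | _, _, .app _ _ => le_max_left _ _

section Subterms

variable {Γ : List Ty} {γ δ : Ty}

theorem complexity_le_lam (K : Tm (γ :: Γ) δ) : complexity K ≤ complexity K.lam :=
  le_max_right _ _

theorem complexity_le_app_left (K : Tm Γ (.arrow γ δ)) (L : Tm Γ γ) :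
    complexity K ≤ complexity (K.app L) :=
  le_max_of_le_right (le_max_left _ _)

theorem complexity_le_app_right (K : Tm Γ (.arrow γ δ)) (L : Tm Γ γ) :
    complexity L ≤ complexity (K.app L) :=
  le_max_of_le_right (le_max_right _ _)

end Subterms

theorem exists_hasRedexOfOrder_of_not_normal :
    ∀ {Γ α} {M : Tm Γ α}, ¬ Normal M →
      ∃ k, 1 ≤ k ∧ k ≤ complexity M ∧ HasRedexOfOrder k M
  | _, _, .var _, h | _, _, .ca, h | _, _, .cb, h | _, _, .ce, h => absurd trivial h
  | _, _, .lam K, h => by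
      obtain ⟨k, hk1, hkc, hr⟩ := exists_hasRedexOfOrder_of_not_normal (M := K) h
      exact ⟨k, hk1, hkc.trans (complexity_le_lam K), hr⟩
  | _, _, .app (γ := γ) (δ := δ) K L, h => by
      simp only [Normal, not_and_or, not_not] at h
      rcases h with hK | hL | hlam
      · obtain ⟨k, hk1, hkc, hr⟩ := exists_hasRedexOfOrder_of_not_normal hK
        exact ⟨k, hk1, hkc.trans (complexity_le_app_left K L), .inr (.inl hr)⟩
      · obtain ⟨k, hk1, hkc, hr⟩ := exists_hasRedexOfOrder_of_not_normal hL
        exact ⟨k, hk1, hkc.trans (complexity_le_app_right K L), .inr (.inr hr)⟩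
      · exact ⟨ord (.arrow γ δ), one_le_ord_arrow γ δ,
          (ord_le_complexity K).trans (complexity_le_app_left K L), .inl ⟨hlam, rfl⟩⟩

theorem isLam_or_hasRedexOfOrder {m : ℕ} (hm : 1 < m) :
    ∀ {Γ α} (M : Tm Γ α), (∀ γ ∈ Γ, ord γ < m) → complexity M ≤ m → ord α = m →
      IsLam M ∨ HasRedexOfOrder m M
  | Γ, _, .var i, hΓ, _, hα => absurd hα (hΓ _ (List.get_mem Γ i)).ne
  | _, _, .ca, _, _, hα | _, _, .cb, _, _, hα | _, _, .ce, _, _, hα => by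
      simp only [ord] at hα; omega
  | _, _, .lam _, _, _, _ => .inl trivial
  | _, _, .app (γ := γ) (δ := δ) K L, hΓ, hc, hα => by
      have hcK := (complexity_le_app_left K L).trans hc
      have hK : ord (.arrow γ δ) = m := by
        have := ord_le_complexity K
        have := ord_right_le_ord_arrow γ δ
        omega
      rcases isLam_or_hasRedexOfOrder hm K hΓ hcK hK with hlam | hr
      · exact .inr (.inl ⟨hlam, hK⟩)
      · exact .inr (.inr (.inl hr))

theorem hasRedexOfOrder_of_complexity_eq {m : ℕ} (hm : 1 < m) :
    ∀ {Γ α} (M : Tm Γ α), (∀ γ ∈ Γ, ord γ < m) → ord α < m → complexity M = m →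
      HasRedexOfOrder m M
  | Γ, _, .var i, hΓ, _, hc => absurd hc (hΓ _ (List.get_mem Γ i)).ne
  | _, _, .ca, _, _, hc | _, _, .cb, _, _, hc | _, _, .ce, _, _, hc => by
      simp only [complexity, ord] at hc; omega
  | _, _, .lam (γ := γ) (δ := δ) K, hΓ, hα, hc => by
      have hγ := ord_left_lt_ord_arrow γ δ
      have hδ := ord_right_le_ord_arrow γ δ
      have hcK : complexity K = m := by
        simp only [complexity] at hc; omega
      refine hasRedexOfOrder_of_complexity_eq hm K ?_ (by omega) hcK
      rintro γ' (_ | ⟨_, hγ'⟩)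
      · omega
      · exact hΓ γ' hγ'
  | _, _, .app (γ := γ) (δ := δ) K L, hΓ, hα, hc => by
      have hcK := (complexity_le_app_left K L).trans hc.le
      have hKm := (ord_le_complexity K).trans hcK
      rcases hKm.eq_or_lt with hK | hK
      · rcases isLam_or_hasRedexOfOrder hm K hΓ hcK hK with hlam | hr
        · exact .inl ⟨hlam, hK⟩
        · exact .inr (.inl hr)
      · have hγ := ord_left_lt_ord_arrow γ δ
        simp only [complexity] at hc
        rcases (by omega : complexity K = m ∨ complexity L = m) with hK' | hL'
        · exact .inr (.inl (hasRedexOfOrder_of_complexity_eq hm K hΓ hK hK'))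
        · exact .inr (.inr (hasRedexOfOrder_of_complexity_eq hm L hΓ (by omega) hL'))

/-- If `M` is a closed term of sort `o`, not in beta-normal form, of complexity `m`,
then `M` contains a redex of order `m`. -/
theorem exists_redex_of_max_order (M : Tm [] .o) (m : ℕ)
    (hM : ¬ Normal M) (hc : complexity M = m) :
    HasRedexOfOrder m M := by
  obtain ⟨k, hk1, hkc, hr⟩ := exists_hasRedexOfOrder_of_not_normal hM
  rcases Nat.lt_or_ge 1 m with hm | hm
  · exact hasRedexOfOrder_of_complexity_eq hm M (by simp) (by simp only [ord]; omega) hc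
  · obtain rfl : k = m := by omega
    exact hr

end STLC
end
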